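/- Let B = (O, Ω, R, Ω∖T, T) be a bud generating system with initial colors I = Ω∖T, and let O_{Ω,B} be the colored operad of elements derivable in B from colored units with output and input colors in Ω∖T. Then the language L(B) = { x = (c,T,c̄) ∈ B_Ω(O) : 1_c →_B x, c ∈ Ω∖T, all entries of c̄ in T } is an algebra over the colored operad O_{Ω,B}: inserting elements of L(B) (graded by their output colors) at the inputs of an operation of O_{Ω,B} with matching colors yields again an element of L(B). -/

import Mathlib

/-- An operad in the category of sets, presented via insertion operations `∘ᵢ`,
with a unit and the standard associativity/commutation axioms. -/
structure Operad where
  Ops : Type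
  arity : Ops → ℕ
  unit : Ops
  arity_unit : arity unit = 1
  ins : Ops → ℕ → Ops → Ops
  arity_ins : ∀ x i y, i < arity x → arity (ins x i y) = arity x + arity y - 1
  unit_ins : ∀ x, ins unit 0 x = x
  ins_unit : ∀ x i, i < arity x → ins x i unit = x
  ins_assoc : ∀ x y z i j, j ≤ i → i < j + arity y →
    ins (ins x j y) i z = ins x j (ins y (i - j) z)
  ins_comm : ∀ x y z i j, i < j → j < arity x →
    ins (ins x j y) i z = ins (ins x i z) (j + arity z - 1) y

/-- An element `(c, T, c̄)` of the bud operad `B_Ω(O)`: an operation `T` of `O`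
together with an output color `c` and a list `c̄` of input colors. -/
structure BudElem (O : Operad) (Ω : Type) where
  out : Ω
  op : O.Ops
  ins : List Ω
  len_eq : ins.length = O.arity op

/-- The colored unit `1_c = (c, 1, c)` of the bud operad. -/
def budUnit (O : Operad) (Ω : Type) (c : Ω) : BudElem O Ω :=
  ⟨c, O.unit, [c], by simp [O.arity_unit]⟩

/-- Colored insertion in the bud operad: `(c,T,c̄) ∘ᵢ (c',T',c̄')` is defined
exactly when `c̄ᵢ = c'`. -/
def budInsert {O : Operad} {Ω : Type} [DecidableEq Ω] (x : BudElem O Ω) (i : ℕ)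
    (r : BudElem O Ω) : Option (BudElem O Ω) :=
  if h : i < O.arity x.op ∧ x.ins[i]? = some r.out then
    some { out := x.out
           op := O.ins x.op i r.op
           ins := x.ins.take i ++ r.ins ++ x.ins.drop (i + 1)
           len_eq := by
             have e1 := x.len_eq
             have e2 := r.len_eq
             have e3 := O.arity_ins x.op i r.op h.1
             simp only [List.length_append, List.length_take, List.length_drop, e3]
             omega }
  else none

/-- Derivability `y →_B x` in a bud generating system with rule set `R`:
`x` is obtained from `y` by a finite sequence of insertions of rules of `R`. -/
inductive BudDerives {O : Operad} {Ω : Type} [DecidableEq Ω] (R : Set (BudElem O Ω)) :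
    BudElem O Ω → BudElem O Ω → Prop where
  | refl (x : BudElem O Ω) : BudDerives R x x
  | step {x y z : BudElem O Ω} (i : ℕ) (r : BudElem O Ω) :
      BudDerives R x y → r ∈ R → budInsert y i r = some z → BudDerives R x z

/-- The colored operad `O_{Ω,B}` determined by a bud generating system with
initial colors `I = Ω ∖ T`: elements derivable from a colored unit, with output
and input colors all nonterminal. -/
def OpsB {O : Operad} {Ω : Type} [DecidableEq Ω] (R : Set (BudElem O Ω)) (Term : Set Ω) :
    Set (BudElem O Ω) :=
  { x | BudDerives R (budUnit O Ω x.out) x ∧ x.out ∉ Term ∧ ∀ c ∈ x.ins, c ∉ Term }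

/-- The language `L(B)`: elements derivable from a colored unit `1_c`, `c ∈ I = Ω ∖ T`,
with all input colors terminal. -/
def BudLang {O : Operad} {Ω : Type} [DecidableEq Ω] (R : Set (BudElem O Ω)) (Term : Set Ω) :
    Set (BudElem O Ω) :=
  { x | BudDerives R (budUnit O Ω x.out) x ∧ x.out ∉ Term ∧ ∀ c ∈ x.ins, c ∈ Term }

/-- Full operadic composition `γ(x; a₁, …, aₙ)` in the bud operad, performed as the
sequence of insertions `(⋯(x ∘ₙ aₙ) ∘_{n-1} a_{n-1} ⋯ ) ∘₁ a₁`. -/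
def budComp {O : Operad} {Ω : Type} [DecidableEq Ω] (x : BudElem O Ω)
    (as : List (BudElem O Ω)) : Option (BudElem O Ω) :=
  (as.zipIdx.map Prod.swap).reverse.foldlM (fun acc p => budInsert acc p.1 p.2) x

/-- The projection `℘_in(c,T,c̄) = (T,c̄)` forgetting the output color. -/
def pIn {O : Operad} {Ω : Type} (x : BudElem O Ω) : O.Ops × List Ω := (x.op, x.ins)

/-- Application of an (uncolored) operation `S` of `O` to a list of pairs
`(Tⱼ, c̄ⱼ)`: operadic composition of the operations together with concatenation
of the color lists. -/
def opComp (O : Operad) {Ω : Type} (S : O.Ops) (as : List (O.Ops × List Ω)) :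
    O.Ops × List Ω :=
  (((as.map Prod.fst).zipIdx.map Prod.swap).reverse.foldl (fun acc p => O.ins acc p.1 p.2) S,
   (as.map Prod.snd).flatten)

/-!
Bud insertion is associative, so a derivation `1_c →_B a` can be replayed inside any element
`x` at an input of color `c`: each rule inserted into `1_c` is inserted into `x ∘ᵢ 1_c = x` at
the shifted position instead. Hence inserting derivable elements into derivable ones stays
derivable, and the composite `γ(x; a₁, …, aₙ)` keeps the output color of `x` and has as input
colors the concatenation of those of the `aⱼ`, which are all terminal.
-/

theorem BudElem.ext {O : Operad} {Ω : Type} {x y : BudElem O Ω} (hout : x.out = y.out)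
    (hop : x.op = y.op) (hins : x.ins = y.ins) : x = y := by
  cases x; cases y; simp_all

theorem List.forall₂_apply_eq_iff_eq_map {α β : Type*} (f : α → β) {as : List α} {l : List β} :
    List.Forall₂ (fun a c => f a = c) as l ↔ l = as.map f := by
  rw [← List.forall₂_map_left_iff (R := Eq), List.forall₂_eq_eq_eq, eq_comm]

section Insertion

variable {O : Operad} {Ω : Type} [DecidableEq Ω]

theorem budInsert_eq_some {x r z : BudElem O Ω} {i : ℕ} (h : budInsert x i r = some z) :
    i < O.arity x.op ∧ x.ins[i]? = some r.out ∧ z.out = x.out ∧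
      z.op = O.ins x.op i r.op ∧ z.ins = x.ins.take i ++ r.ins ++ x.ins.drop (i + 1) := by
  unfold budInsert at h
  split_ifs at h with hdef
  cases h
  exact ⟨hdef.1, hdef.2, rfl, rfl, rfl⟩

theorem exists_budInsert_eq_some {x r : BudElem O Ω} {i : ℕ}
    (hi : i < O.arity x.op) (hr : x.ins[i]? = some r.out) :
    ∃ w, budInsert x i r = some w := by
  unfold budInsert
  exact ⟨_, dif_pos ⟨hi, hr⟩⟩

theorem budInsert_budUnit {x : BudElem O Ω} {i : ℕ} {c : Ω} (h : x.ins[i]? = some c) :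
    budInsert x i (budUnit O Ω c) = some x := by
  obtain ⟨hi, hc⟩ := List.getElem?_eq_some_iff.mp h
  have hi' : i < O.arity x.op := x.len_eq ▸ hi
  obtain ⟨w, hw⟩ := exists_budInsert_eq_some (r := budUnit O Ω c) hi' h
  obtain ⟨-, -, hwout, hwop, hwins⟩ := budInsert_eq_some hw
  refine hw.trans (congrArg some (BudElem.ext hwout ?_ ?_))
  · rw [hwop]
    exact O.ins_unit x.op i hi'
  · rw [hwins]
    change x.ins.take i ++ [c] ++ x.ins.drop (i + 1) = x.ins
    rw [List.append_assoc, List.singleton_append, ← hc, ← List.drop_eq_getElem_cons hi,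
      List.take_append_drop]

theorem budInsert_assoc {x y r a z : BudElem O Ω} {i j : ℕ}
    (hyr : budInsert y j r = some a) (hxa : budInsert x i a = some z) :
    ∃ w, budInsert x i y = some w ∧ budInsert w (i + j) r = some z := by
  obtain ⟨hj, hyj, haout, haop, hains⟩ := budInsert_eq_some hyr
  obtain ⟨hi, hxi, hzout, hzop, hzins⟩ := budInsert_eq_some hxa
  obtain ⟨w, hw⟩ := exists_budInsert_eq_some hi (haout ▸ hxi)
  obtain ⟨-, -, hwout, hwop, hwins⟩ := budInsert_eq_some hw
  have hjy : j < y.ins.length := y.len_eq ▸ hj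
  set L := x.ins.take i
  set D := x.ins.drop (i + 1)
  have hL : L.length = i := by
    rw [List.length_take]
    have := x.len_eq
    omega
  rw [List.append_assoc] at hwins
  have hwj : w.ins[i + j]? = some r.out := by
    rw [hwins, List.getElem?_append_right (by omega), hL, Nat.add_sub_cancel_left,
      List.getElem?_append_left hjy, hyj]
  have hwarity : i + j < O.arity w.op := by
    rw [hwop, O.arity_ins x.op i y.op hi]
    omega
  obtain ⟨v, hv⟩ := exists_budInsert_eq_some hwarity hwj
  obtain ⟨-, -, hvout, hvop, hvins⟩ := budInsert_eq_some hv
  refine ⟨w, hw, hv.trans (congrArg some (BudElem.ext ?_ ?_ ?_))⟩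
  · rw [hvout, hwout, hzout]
  · rw [hvop, hwop, hzop, haop, O.ins_assoc x.op y.op r.op (i + j) i (by omega) (by omega),
      Nat.add_sub_cancel_left]
  · rw [hvins, hzins, hains, hwins, ← hL, List.take_length_add_append, Nat.add_assoc,
      List.drop_length_add_append, List.take_append_of_le_length (by omega),
      List.drop_append_of_le_length (by omega)]
    simp only [List.append_assoc]

end Insertion

section Composition

variable {O : Operad} {Ω : Type} [DecidableEq Ω]

theorem budComp_nil (x : BudElem O Ω) : budComp x [] = some x := rfl

theorem budComp_append_singleton (x a : BudElem O Ω) (as : List (BudElem O Ω)) :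
    budComp x (as ++ [a]) = (budInsert x as.length a).bind (budComp · as) := by
  simp [budComp, List.zipIdx_append]

theorem exists_budInsert_length_eq_some {x a : BudElem O Ω} {l s : List Ω}
    (hx : x.ins = l ++ a.out :: s) :
    ∃ w, budInsert x l.length a = some w ∧ w.out = x.out ∧ w.ins = l ++ a.ins ++ s := by
  have hl : l.length < O.arity x.op := by
    rw [← x.len_eq, hx]
    simp
  obtain ⟨w, hw⟩ := exists_budInsert_eq_some (r := a) hl (by simp [hx])
  obtain ⟨-, -, hwout, -, hwins⟩ := budInsert_eq_some hw
  refine ⟨w, hw, hwout, ?_⟩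
  simp [hwins, hx]

theorem exists_budComp_eq_some {x : BudElem O Ω} {as : List (BudElem O Ω)} {s : List Ω}
    (hx : x.ins = as.map BudElem.out ++ s) :
    ∃ z, budComp x as = some z ∧ z.out = x.out ∧ z.ins = (as.map BudElem.ins).flatten ++ s := by
  induction as using List.reverseRecOn generalizing x s with
  | nil => exact ⟨x, budComp_nil x, rfl, by simpa using hx⟩
  | append_singleton as a ih =>
    obtain ⟨w, hw, hwout, hwins⟩ := exists_budInsert_length_eq_some (a := a) (s := s)
      (l := as.map BudElem.out) (by simpa using hx)
    obtain ⟨z, hz, hzout, hzins⟩ := ih (s := a.ins ++ s) (by simpa using hwins)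
    refine ⟨z, ?_, hzout.trans hwout, by simpa using hzins⟩
    rw [budComp_append_singleton, ← List.length_map BudElem.out, hw]
    exact hz

end Composition

section Derivation

variable {O : Operad} {Ω : Type} [DecidableEq Ω] {R : Set (BudElem O Ω)}

theorem BudDerives.trans_budInsert {u x a z : BudElem O Ω} {c : Ω} {i : ℕ}
    (hx : BudDerives R u x) (ha : BudDerives R (budUnit O Ω c) a)
    (hz : budInsert x i a = some z) : BudDerives R u z := by
  induction ha generalizing x z i with
  | refl =>
    obtain ⟨-, hxi, -⟩ := budInsert_eq_some hz
    rw [budInsert_budUnit (c := c) hxi, Option.some_inj] at hz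
    exact hz ▸ hx
  | step j r _ hr hins ih =>
    obtain ⟨w, hw, hwz⟩ := budInsert_assoc hins hz
    exact BudDerives.step (i + j) r (ih hx hw) hr hwz

theorem BudDerives.trans_budComp {u x z : BudElem O Ω} {as : List (BudElem O Ω)}
    (hx : BudDerives R u x) (has : ∀ a ∈ as, BudDerives R (budUnit O Ω a.out) a)
    (hz : budComp x as = some z) : BudDerives R u z := by
  induction as using List.reverseRecOn generalizing x with
  | nil =>
    rw [budComp_nil, Option.some_inj] at hz
    exact hz ▸ hx
  | append_singleton as a ih =>
    rw [budComp_append_singleton, Option.bind_eq_some_iff] at hz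
    obtain ⟨w, hw, hwz⟩ := hz
    exact ih (hx.trans_budInsert (has a (by simp)) hw) (fun b hb => has b (by simp [hb])) hwz

end Derivation

theorem statement1_general (O : Operad) (Ω : Type) [DecidableEq Ω]
    (R : Set (BudElem O Ω)) (Term : Set Ω) :
    ∀ x ∈ OpsB R Term, ∀ as : List (BudElem O Ω),
      List.Forall₂ (fun (a : BudElem O Ω) (c : Ω) => a.out = c) as x.ins →
      (∀ a ∈ as, a ∈ BudLang R Term) →
      ∃ z : BudElem O Ω, budComp x as = some z ∧ z ∈ BudLang R Term := by
  rintro x ⟨hx, hout, -⟩ as hcolors hlang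
  have hxins : x.ins = as.map BudElem.out ++ [] := by
    rw [List.append_nil, ← List.forall₂_apply_eq_iff_eq_map]
    exact hcolors
  obtain ⟨z, hz, hzout, hzins⟩ := exists_budComp_eq_some hxins
  refine ⟨z, hz, ?_, hzout ▸ hout, ?_⟩
  · rw [hzout]
    exact hx.trans_budComp (fun a ha => (hlang a ha).1) hz
  · intro c hc
    simp only [hzins, List.append_nil, List.mem_flatten, List.mem_map] at hc
    obtain ⟨l, ⟨a, ha, rfl⟩, hcl⟩ := hc
    exact (hlang a ha).2.2 c hcl

/-- For a bud generating system `B = (O, Ω, R, Ω∖T, T)` with initial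
colors `I = Ω∖T`, the language `L(B)` is an algebra over the colored operad
`O_{Ω,B}`: inserting elements of `L(B)` (graded by their output colors) at the
inputs of an operation of `O_{Ω,B}` with matching colors yields again an element
of `L(B)`. -/
theorem statement1 (O : Operad) (Ω : Type) [Finite Ω] [DecidableEq Ω]
    (R : Set (BudElem O Ω)) (hR : R.Finite) (Term : Set Ω) :
    ∀ x ∈ OpsB R Term, ∀ as : List (BudElem O Ω),
      List.Forall₂ (fun (a : BudElem O Ω) (c : Ω) => a.out = c) as x.ins →
      (∀ a ∈ as, a ∈ BudLang R Term) →
      ∃ z : BudElem O Ω, budComp x as = some z ∧ z ∈ BudLang R Term :=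
  statement1_general O Ω R Term
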